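/- Let F be a field, d, k ∈ ℕ, and suppose rank : Pol_{≤d}(F^∞, F^k) → ℝ₊ satisfies the linear core property (with some constants L, β > 0 and rank threshold r₀), monotonicity under restrictions, and the restriction Lipschitz property. Then for every σ ∈ (0,1] there exist constants C, κ > 0 such that for every n ∈ ℕ and every polynomial map φ ∈ Pol_{≤d}(F^n, F^k): if I ~ [n]_σ is a random subset, then Pr[rank(φ_{|I}) ≥ κ·rank(φ)] ≥ 1 − C·e^{−κ·rank(φ)}. -/

import Mathlib

/-- An element of `Pol(F^∞, F^k)`: a `k`-tuple of polynomials in variables indexed by `ℕ`. -/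
abbrev PolyMap (F : Type*) [CommSemiring F] (k : ℕ) := Fin k → MvPolynomial ℕ F

/-- `φ` has degree at most `d`, i.e. `φ ∈ Pol_{≤d}(F^∞, F^k)`. -/
def DegLE {F : Type*} [CommSemiring F] {k : ℕ} (d : ℕ) (φ : PolyMap F k) : Prop :=
  ∀ j, (φ j).totalDegree ≤ d

open Classical in
/-- The restriction `φ_{|I}`: substitute `0` for every variable `x_i` with `i ∉ I`. -/
noncomputable def prestrict {F : Type*} [CommSemiring F] {k : ℕ} (I : Set ℕ)
    (φ : PolyMap F k) : PolyMap F k :=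
  fun j => MvPolynomial.aeval (fun i => if i ∈ I then MvPolynomial.X i else 0) (φ j)

open Classical in
/-- The probability, under the distribution on subsets of `Fin n` where each element is
included independently with probability `σ`, of the event `E`. -/
noncomputable def subsetPr (n : ℕ) (σ : ℝ) (E : Finset (Fin n) → Prop) : ℝ :=
  ∑ I : Finset (Fin n), if E I then σ ^ I.card * (1 - σ) ^ (n - I.card) else 0

/-!
Write `f A = rank (φ_{|A})` for finite `A ⊆ ℕ`: a nonnegative monotone set function that grows by
at most `#B` when `B` is added and has linear cores. One round of `τ`-random restriction of `J`
keeps `f` above `γ f J`, `γ = min (β / 2) 1`, except with probability `e^{-f J}`: otherwise the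
random set misses more than `β f J / 2` points of a core `I ⊆ J` with `#I ≤ L f J`, which has
probability at most `2 ^ #I (1 - τ) ^ (β f J / 2) ≤ e^{-f J}` once `τ` is close to `1`. A
`σ`-random subset is an `m`-fold iterated `τ`-random subset when `τ ^ m = σ`, so a union bound
over the rounds gives `κ = γ ^ m` and `C = m + e^{r₀}`; the term `e^{r₀}` makes the bound trivial
when `κ rank φ < r₀`, where no core is available.
-/

open Finset Real

theorem MvPolynomial.totalDegree_aeval_le {σ τ R : Type*} [CommSemiring R]
    {g : σ → MvPolynomial τ R} (hg : ∀ i, (g i).totalDegree ≤ 1) (p : MvPolynomial σ R) :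
    (aeval g p).totalDegree ≤ p.totalDegree := by
  conv_lhs => rw [p.as_sum, map_sum]
  refine totalDegree_finsetSum_le fun u hu => ?_
  rw [aeval_monomial, algebraMap_eq]
  refine (totalDegree_mul _ _).trans ?_
  rw [totalDegree_C, zero_add]
  refine (totalDegree_finsetProd _ _).trans ((le_totalDegree hu).trans' ?_)
  refine sum_le_sum fun i _ => (totalDegree_pow _ _).trans ?_
  simpa using Nat.mul_le_mul_left (u i) (hg i)

section Restriction

variable {F : Type*} [CommSemiring F] {k : ℕ}

lemma prestrict_prestrict (I J : Set ℕ) (φ : PolyMap F k) :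
    prestrict I (prestrict J φ) = prestrict (I ∩ J) φ := by
  classical
  funext j
  simp only [prestrict, MvPolynomial.comp_aeval_apply]
  refine congrArg (MvPolynomial.aeval · (φ j)) (funext fun i => ?_)
  by_cases hJ : i ∈ J <;> by_cases hI : i ∈ I <;> simp [hI, hJ]

lemma prestrict_eq_self {s : Set ℕ} {φ : PolyMap F k} (h : ∀ j, ↑(φ j).vars ⊆ s) :
    prestrict s φ = φ := by
  classical
  exact funext fun j => MvPolynomial.aeval_ite_mem_eq_self (φ j) (h j)

lemma vars_prestrict_subset (I : Set ℕ) (φ : PolyMap F k) (j : Fin k) :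
    (prestrict I φ j).vars ⊆ (φ j).vars := by
  classical
  rw [prestrict, MvPolynomial.aeval_eq_bind₁]
  refine (MvPolynomial.vars_bind₁ _ _).trans fun x hx => ?_
  obtain ⟨i, hi, hx⟩ := mem_biUnion.1 hx
  split_ifs at hx
  · rw [MvPolynomial.vars_def, Multiset.mem_toFinset] at hx
    rwa [Multiset.mem_singleton.1 (Multiset.mem_of_le (MvPolynomial.degrees_X' i) hx)]
  · simp at hx

lemma DegLE.prestrict {d : ℕ} {φ : PolyMap F k} (h : DegLE d φ) (I : Set ℕ) :
    DegLE d (prestrict I φ) := fun j =>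
  (MvPolynomial.totalDegree_aeval_le (fun i => by
    split_ifs
    · exact (MvPolynomial.totalDegree_monomial_le _ _).trans (by simp)
    · simp) (φ j)).trans (h j)

end Restriction

namespace RandomSubset

variable {α : Type*} [DecidableEq α]

/-- `weight s τ A` is the probability that a `τ`-random subset of `s`, containing each element
independently with probability `τ`, equals `A ⊆ s`. -/
noncomputable def weight (s : Finset α) (τ : ℝ) (A : Finset α) : ℝ :=
  τ ^ #A * (1 - τ) ^ #(s \ A)

noncomputable def mean (s : Finset α) (τ : ℝ) (g : Finset α → ℝ) : ℝ :=
  ∑ A ∈ s.powerset, weight s τ A * g A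

open Classical in
noncomputable def prob (s : Finset α) (τ : ℝ) (E : Finset α → Prop) : ℝ :=
  mean s τ fun A => if E A then 1 else 0

variable {s I A : Finset α} {a : α} {σ τ c : ℝ} {g h : Finset α → ℝ} {E E' : Finset α → Prop}

lemma weight_nonneg (h0 : 0 ≤ τ) (h1 : τ ≤ 1) (s A : Finset α) : 0 ≤ weight s τ A :=
  mul_nonneg (pow_nonneg h0 _) (pow_nonneg (sub_nonneg.2 h1) _)

lemma sum_weight (s : Finset α) (τ : ℝ) : ∑ A ∈ s.powerset, weight s τ A = 1 := by
  simpa [weight] using (prod_add (fun _ => τ) (fun _ => 1 - τ) s).symm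

lemma weight_insert (ha : a ∉ s) (hA : A ⊆ s) :
    weight (insert a s) τ A = (1 - τ) * weight s τ A := by
  have haA : a ∉ s \ A := fun h => ha (mem_sdiff.1 h).1
  rw [weight, weight, insert_sdiff_of_notMem _ (fun h => ha (hA h)), card_insert_of_notMem haA]
  ring

lemma weight_insert_insert (ha : a ∉ s) (hA : A ⊆ s) :
    weight (insert a s) τ (insert a A) = τ * weight s τ A := by
  rw [weight, weight, insert_sdiff_insert, sdiff_insert_of_notMem ha,
    card_insert_of_notMem (fun h => ha (hA h))]
  ring

lemma mean_congr (hgh : ∀ A ⊆ s, g A = h A) : mean s τ g = mean s τ h :=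
  sum_congr rfl fun A hA => by rw [hgh A (mem_powerset.1 hA)]

lemma mean_mono (h0 : 0 ≤ τ) (h1 : τ ≤ 1) (hgh : ∀ A ⊆ s, g A ≤ h A) :
    mean s τ g ≤ mean s τ h :=
  sum_le_sum fun A hA =>
    mul_le_mul_of_nonneg_left (hgh A (mem_powerset.1 hA)) (weight_nonneg h0 h1 s A)

lemma mean_add : mean s τ (fun A => g A + h A) = mean s τ g + mean s τ h := by
  simp only [mean, mul_add, sum_add_distrib]

lemma mean_const_mul : mean s τ (fun A => c * g A) = c * mean s τ g := by
  simp only [mean, mul_sum]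
  exact sum_congr rfl fun A _ => by ring

lemma mean_const : mean s τ (fun _ => c) = c := by
  rw [mean, ← sum_mul, sum_weight, one_mul]

lemma mean_insert (ha : a ∉ s) (g : Finset α → ℝ) :
    mean (insert a s) τ g
      = (1 - τ) * mean s τ g + τ * mean s τ (fun A => g (insert a A)) := by
  rw [mean, sum_powerset_insert ha, mean, mean, mul_sum, mul_sum]
  congr 1 <;> refine sum_congr rfl fun A hA => ?_
  · rw [weight_insert ha (mem_powerset.1 hA), mul_assoc]
  · rw [weight_insert_insert ha (mem_powerset.1 hA), mul_assoc]

lemma mean_one (s : Finset α) (g : Finset α → ℝ) : mean s 1 g = g s := by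
  rw [mean, sum_eq_single_of_mem s (mem_powerset_self s)]
  · simp [weight]
  · intro A hA hAs
    have hne : #(s \ A) ≠ 0 :=
      (card_pos.2 (sdiff_nonempty.2 fun h => hAs (subset_antisymm (mem_powerset.1 hA) h))).ne'
    simp [weight, zero_pow hne]

lemma mean_mul (s : Finset α) (σ τ : ℝ) (g : Finset α → ℝ) :
    mean s (σ * τ) g = mean s σ (fun A => mean A τ g) := by
  induction s using Finset.induction_on generalizing g with
  | empty => simp [mean, weight]
  | @insert a s ha ih =>
    rw [mean_insert ha, ih, ih, mean_insert ha,
      mean_congr fun A hA => mean_insert (fun h => ha (hA h)) g, mean_add,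
      mean_const_mul, mean_const_mul]
    ring

lemma mean_of_inter_eq (hIs : I ⊆ s) (hg : ∀ A, g (A ∩ I) = g A) :
    mean s τ g = mean I τ g := by
  suffices ∀ t : Finset α, mean (t ∪ I) τ g = mean I τ g by
    rw [← this s, union_eq_left.2 hIs]
  intro t
  induction t using Finset.induction_on with
  | empty => rw [empty_union]
  | @insert a t ha ih =>
    by_cases haI : a ∈ I
    · rwa [insert_union, insert_eq_of_mem (mem_union_right t haI)]
    · have hins : ∀ A, g (insert a A) = g A := fun A => by
        rw [← hg, insert_inter_of_notMem haI, hg]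
      rw [insert_union, mean_insert (by simp [ha, haI])]
      simp only [hins, ih]
      ring

lemma prob_le_one (h0 : 0 ≤ τ) (h1 : τ ≤ 1) (s : Finset α) (E : Finset α → Prop) :
    prob s τ E ≤ 1 := by
  refine (mean_mono h0 h1 (h := fun _ => 1) fun A _ => ?_).trans mean_const.le
  split_ifs <;> norm_num

lemma prob_mono (h0 : 0 ≤ τ) (h1 : τ ≤ 1) (hE : ∀ A ⊆ s, E A → E' A) :
    prob s τ E ≤ prob s τ E' :=
  mean_mono h0 h1 fun A hA => by
    by_cases h : E A
    · simp [h, hE A hA h]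
    · simp only [h, if_false]; split_ifs <;> norm_num

lemma prob_not (s : Finset α) (τ : ℝ) (E : Finset α → Prop) :
    prob s τ (fun A => ¬E A) = 1 - prob s τ E := by
  rw [eq_sub_iff_add_eq, prob, prob, ← mean_add]
  exact (mean_congr fun A _ => by by_cases h : E A <;> simp [h]).trans mean_const

lemma prob_of_inter_eq (hIs : I ⊆ s) (hE : ∀ A, E (A ∩ I) ↔ E A) :
    prob s τ E = prob I τ E :=
  mean_of_inter_eq hIs fun A => by rw [hE]

lemma prob_lt_card_sdiff_le {b t : ℝ} (h0 : 0 ≤ τ) (h1 : τ ≤ 1) (hb : 0 ≤ b)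
    (hτ : 1 - τ ≤ exp (-b)) (s : Finset α) :
    prob s τ (fun A => t < #(s \ A)) ≤ 2 ^ #s * exp (-(b * t)) := by
  have hterm : ∀ A ∈ s.powerset,
      weight s τ A * (if t < #(s \ A) then 1 else 0) ≤ exp (-(b * t)) := by
    intro A _
    split_ifs with ht
    · calc weight s τ A * 1 ≤ 1 * exp (-b) ^ #(s \ A) := by
            rw [mul_one, weight]
            exact mul_le_mul (pow_le_one₀ h0 h1) (pow_le_pow_left₀ (sub_nonneg.2 h1) hτ _)
              (pow_nonneg (sub_nonneg.2 h1) _) zero_le_one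
        _ = exp (-(b * #(s \ A))) := by rw [one_mul, ← exp_nat_mul]; ring_nf
        _ ≤ exp (-(b * t)) := exp_le_exp.2 (by nlinarith)
    · rw [mul_zero]; exact (exp_pos _).le
  calc prob s τ (fun A => t < #(s \ A))
      ≤ ∑ _A ∈ s.powerset, exp (-(b * t)) := sum_le_sum hterm
    _ = 2 ^ #s * exp (-(b * t)) := by simp

end RandomSubset

open RandomSubset in
lemma subsetPr_eq_prob (n : ℕ) (σ : ℝ) (E : Finset ℕ → Prop) :
    subsetPr n σ (fun I => E (I.image Fin.val)) = prob (range n) σ E := by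
  classical
  have himage : ∀ I : Finset (Fin n), I.image Fin.val ⊆ range n := fun I m hm => by
    obtain ⟨i, -, rfl⟩ := mem_image.1 hm
    exact mem_range.2 i.isLt
  rw [subsetPr, prob, RandomSubset.mean]
  refine sum_nbij' (fun I => I.image Fin.val) (fun A => univ.filter fun i : Fin n => (i : ℕ) ∈ A)
    (fun I _ => mem_powerset.2 (himage I)) (fun A _ => mem_univ _) ?_ ?_ ?_
  · intro I _
    ext i
    simp [Fin.val_inj]
  · intro A hA
    ext m
    simp only [mem_image, mem_filter, mem_univ, true_and]
    constructor
    · rintro ⟨i, hi, rfl⟩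
      exact hi
    · intro hm
      exact ⟨⟨m, mem_range.1 (mem_powerset.1 hA hm)⟩, hm, rfl⟩
  · intro I _
    rw [weight, card_sdiff_of_subset (himage I), card_image_of_injective I Fin.val_injective,
      card_range]
    split_ifs <;> simp

section LinearCoreRank

open RandomSubset

variable {α : Type*} [DecidableEq α]

structure IsLinearCoreRank (f : Finset α → ℝ) (L β r₀ : ℝ) : Prop where
  nonneg : ∀ A, 0 ≤ f A
  mono : Monotone f
  union_le : ∀ A B, f (A ∪ B) ≤ f A + #B
  exists_core : ∀ J, r₀ ≤ f J → ∃ I ⊆ J, (#I : ℝ) ≤ L * f J ∧ β * f J ≤ f I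

namespace IsLinearCoreRank

variable {f : Finset α → ℝ} {L β r₀ γ τ : ℝ}

lemma le_add_card_sdiff (hf : IsLinearCoreRank f L β r₀) (A I : Finset α) :
    f I ≤ f A + #(I \ A) :=
  calc f I = f (I ∩ A ∪ I \ A) := by rw [union_comm, sdiff_union_inter]
    _ ≤ f (I ∩ A) + #(I \ A) := hf.union_le _ _
    _ ≤ f A + #(I \ A) := by gcongr; exact hf.mono inter_subset_right

lemma prob_lt_le_exp (hf : IsLinearCoreRank f L β r₀) (hL : 0 ≤ L) (hβ : 0 < β)
    (hγ : γ ≤ β / 2) (hτ0 : 0 ≤ τ) (hτ1 : τ ≤ 1)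
    (hτ : 1 - τ ≤ exp (-(2 * (1 + L * log 2) / β))) {J : Finset α} (hJ : r₀ ≤ f J) :
    prob J τ (fun A => f A < γ * f J) ≤ exp (-f J) := by
  obtain ⟨I, hIJ, hIcard, hIf⟩ := hf.exists_core J hJ
  have hρ := hf.nonneg J
  calc prob J τ (fun A => f A < γ * f J)
      ≤ prob J τ (fun A => β * f J / 2 < #(I \ A)) := prob_mono hτ0 hτ1 fun A _ hA => by
        nlinarith [hf.le_add_card_sdiff A I]
    _ = prob I τ (fun A => β * f J / 2 < #(I \ A)) :=
        prob_of_inter_eq hIJ fun A => by rw [sdiff_inter_self_right]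
    _ ≤ 2 ^ #I * exp (-(2 * (1 + L * log 2) / β * (β * f J / 2))) :=
        prob_lt_card_sdiff_le hτ0 hτ1 (by positivity) hτ I
    _ ≤ exp (L * f J * log 2) * exp (-(2 * (1 + L * log 2) / β * (β * f J / 2))) := by
        gcongr
        rw [← rpow_natCast, rpow_def_of_pos two_pos, mul_comm]
        gcongr
    _ = exp (-f J) := by
        rw [← exp_add]
        field_simp
        ring_nf

lemma prob_lt_pow_mul_le (hf : IsLinearCoreRank f L β r₀) (hγ0 : 0 ≤ γ) (hγ1 : γ ≤ 1)
    (hτ0 : 0 ≤ τ) (hτ1 : τ ≤ 1)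
    (hstep : ∀ J, r₀ ≤ f J → prob J τ (fun A => f A < γ * f J) ≤ exp (-f J)) (M : ℕ)
    {J : Finset α} (hJ : r₀ ≤ γ ^ M * f J) :
    prob J (τ ^ M) (fun A => f A < γ ^ M * f J) ≤ M * exp (-(γ ^ M * f J)) := by
  induction M generalizing J with
  | zero => simp [prob, mean_one]
  | succ M ih =>
    set ρ := f J
    have hρ : 0 ≤ ρ := hf.nonneg J
    have hτM0 : 0 ≤ τ ^ M := pow_nonneg hτ0 M
    have hτM1 : τ ^ M ≤ 1 := pow_le_one₀ hτ0 hτ1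
    have hγρ : γ ^ (M + 1) * ρ ≤ ρ := mul_le_of_le_one_left hρ (pow_le_one₀ hγ0 hγ1)
    set e := exp (-(γ ^ (M + 1) * ρ))
    have hround : ∀ A ⊆ J, prob A (τ ^ M) (fun B => f B < γ ^ (M + 1) * ρ)
        ≤ (if f A < γ * ρ then 1 else 0) + M * e := by
      intro A _
      split_ifs with hA
      · have := prob_le_one hτM0 hτM1 A (fun B => f B < γ ^ (M + 1) * ρ)
        have : 0 ≤ M * e := by positivity
        linarith
      · have hle : γ ^ (M + 1) * ρ ≤ γ ^ M * f A := by
          rw [pow_succ, mul_assoc]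
          exact mul_le_mul_of_nonneg_left (not_lt.1 hA) (pow_nonneg hγ0 M)
        calc prob A (τ ^ M) (fun B => f B < γ ^ (M + 1) * ρ)
            ≤ prob A (τ ^ M) (fun B => f B < γ ^ M * f A) :=
              prob_mono hτM0 hτM1 fun B _ hB => hB.trans_le hle
          _ ≤ M * exp (-(γ ^ M * f A)) := ih (hJ.trans hle)
          _ ≤ 0 + M * e := by rw [zero_add]; gcongr; exact exp_le_exp.2 (neg_le_neg hle)
    calc prob J (τ ^ (M + 1)) (fun A => f A < γ ^ (M + 1) * ρ)
        = mean J τ (fun A => prob A (τ ^ M) (fun B => f B < γ ^ (M + 1) * ρ)) := by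
          rw [pow_succ', prob, mean_mul]; rfl
      _ ≤ mean J τ (fun A => (if f A < γ * ρ then 1 else 0) + M * e) :=
          mean_mono hτ0 hτ1 hround
      _ = prob J τ (fun A => f A < γ * ρ) + M * e := by rw [mean_add, mean_const]; rfl
      _ ≤ exp (-ρ) + M * e := by gcongr; exact hstep J (hJ.trans hγρ)
      _ ≤ (M + 1 : ℕ) * e := by
          have : exp (-ρ) ≤ e := exp_le_exp.2 (by linarith)
          push_cast
          linarith

end IsLinearCoreRank

end LinearCoreRank

lemma exists_pow_eq_of_lt_one {σ b : ℝ} (hσ0 : 0 < σ) (hσ1 : σ ≤ 1) (hb : b < 1) :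
    ∃ (m : ℕ) (τ : ℝ), 0 ≤ τ ∧ τ ≤ 1 ∧ b ≤ τ ∧ τ ^ m = σ := by
  obtain ⟨m, hm⟩ := exists_pow_lt_of_lt_one hσ0 (max_lt hb one_pos : max b 0 < 1)
  have hm0 : m ≠ 0 := by rintro rfl; rw [pow_zero] at hm; linarith
  have hτ0 : 0 ≤ σ ^ (m⁻¹ : ℝ) := rpow_nonneg hσ0.le _
  have hτm : (σ ^ (m⁻¹ : ℝ)) ^ m = σ := rpow_inv_natCast_pow hσ0.le hm0
  refine ⟨m, σ ^ (m⁻¹ : ℝ), hτ0, rpow_le_one hσ0.le hσ1 (by positivity), ?_, hτm⟩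
  exact (le_max_left b 0).trans (lt_of_pow_lt_pow_left₀ m hτ0 (hτm.symm ▸ hm)).le

open RandomSubset in
theorem IsLinearCoreRank.exists_le_prob {α : Type*} [DecidableEq α] {L β r₀ σ : ℝ}
    (hL : 0 ≤ L) (hβ : 0 < β) (hσ0 : 0 < σ) (hσ1 : σ ≤ 1) :
    ∃ C κ : ℝ, 0 < C ∧ 0 < κ ∧ ∀ f : Finset α → ℝ, IsLinearCoreRank f L β r₀ →
      ∀ J, 1 - C * exp (-κ * f J) ≤ prob J σ (fun A => κ * f J ≤ f A) := by
  obtain ⟨m, τ, hτ0, hτ1, hτ, rfl⟩ := exists_pow_eq_of_lt_one hσ0 hσ1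
    (sub_lt_self 1 (exp_pos (-(2 * (1 + L * log 2) / β))))
  set γ := min (β / 2) 1
  have hγ0 : 0 < γ := lt_min (half_pos hβ) one_pos
  refine ⟨m + exp r₀, γ ^ m, by positivity, pow_pos hγ0 m, fun f hf J => ?_⟩
  have hgood : prob J (τ ^ m) (fun A => γ ^ m * f J ≤ f A)
      = 1 - prob J (τ ^ m) (fun A => f A < γ ^ m * f J) := by
    simp_rw [← not_lt]; exact prob_not _ _ _
  rw [hgood, neg_mul]
  rcases le_or_gt r₀ (γ ^ m * f J) with hJ | hJ
  · have := hf.prob_lt_pow_mul_le hγ0.le (min_le_right _ _) hτ0 hτ1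
      (fun J hJ => hf.prob_lt_le_exp hL hβ (min_le_left _ _) hτ0 hτ1 (by linarith) hJ) m hJ
    nlinarith [exp_pos r₀, exp_pos (-(γ ^ m * f J))]
  · have h1 : 1 < exp r₀ * exp (-(γ ^ m * f J)) := by
      rw [← exp_add]; exact one_lt_exp_iff.2 (by linarith)
    nlinarith [prob_le_one (pow_nonneg hτ0 m) (pow_le_one₀ hτ0 hτ1) J
      (fun A => f A < γ ^ m * f J), exp_pos (-(γ ^ m * f J)), (m.cast_nonneg : (0 : ℝ) ≤ m)]

theorem isLinearCoreRank_rank_prestrict {F : Type*} [CommSemiring F] {d k n : ℕ}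
    {rank : PolyMap F k → ℝ} {L β r₀ : ℝ} (hnn : ∀ φ, DegLE d φ → 0 ≤ rank φ)
    (hcore : ∀ ψ : PolyMap F k, DegLE d ψ → (∀ j, (ψ j).vars ⊆ range n) → r₀ ≤ rank ψ →
      ∃ I : Finset ℕ, (#I : ℝ) ≤ L * rank ψ ∧ β * rank ψ ≤ rank (prestrict ↑I ψ))
    (hmono : ∀ (φ : PolyMap F k) (I : Set ℕ), DegLE d φ → rank (prestrict I φ) ≤ rank φ)
    (hlip : ∀ (φ : PolyMap F k) (I J : Set ℕ), DegLE d φ → J.Finite →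
      rank (prestrict (I ∪ J) φ) ≤ rank (prestrict I φ) + J.ncard)
    {φ : PolyMap F k} (hφ : DegLE d φ) (hvars : ∀ j, (φ j).vars ⊆ range n) :
    IsLinearCoreRank (fun A : Finset ℕ => rank (prestrict ↑A φ)) L β r₀ := by
  have hres : ∀ A B : Finset ℕ, prestrict ↑B (prestrict ↑A φ) = prestrict ↑(B ∩ A) φ :=
    fun A B => by rw [prestrict_prestrict, coe_inter]
  refine ⟨fun A => hnn _ (hφ.prestrict _), fun B A hBA => ?_, fun A B => ?_, fun J hJ => ?_⟩
  · rw [← inter_eq_left.2 hBA, ← hres]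
    exact hmono _ _ (hφ.prestrict _)
  · simpa [coe_union, Set.ncard_coe_finset] using hlip φ A B hφ (finite_toSet B)
  · obtain ⟨I, hIcard, hI⟩ := hcore _ (hφ.prestrict _)
      (fun j => (vars_prestrict_subset _ φ j).trans (hvars j)) hJ
    refine ⟨I ∩ J, inter_subset_right, ?_, ?_⟩
    · exact (Nat.cast_le.2 (card_le_card inter_subset_left)).trans hIcard
    · rwa [hres] at hI

/-- **Random restriction theorem for polynomial maps from the linear core property**: if a
rank function on `Pol_{≤d}(F^∞, F^k)` is nonnegative, satisfies the linear core property
(with constants `L, β > 0` and rank threshold `r₀`), monotonicity under restrictions and the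
restriction Lipschitz property, then for every `σ ∈ (0,1]` there are `C, κ > 0` such that
for every `φ ∈ Pol_{≤d}(F^n, F^k)`, the restriction of `φ` to a `σ`-random subset `I ⊆ [n]`
has rank at least `κ·rank φ` with probability at least `1 - C·e^{-κ·rank φ}`. -/
theorem random_restriction_polymap_from_linear_core
    (F : Type) [Field F] (d k : ℕ) (rank : PolyMap F k → ℝ)
    (L β r₀ : ℝ) (hL : 0 < L) (hβ : 0 < β)
    -- rank takes nonnegative values
    (hnn : ∀ φ, DegLE d φ → 0 ≤ rank φ)
    -- linear core property with constants L, β and threshold r₀: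
    -- for every φ ∈ Pol_{≤d}(F^n, F^k) with rank φ ≥ r₀ there is a set I ⊆ [n] of size
    -- at most L·rank φ such that rank φ_{|I} ≥ β·rank φ
    (hcore : ∀ (n : ℕ) (φ : PolyMap F k), DegLE d φ →
      (∀ j, (φ j).vars ⊆ Finset.range n) → r₀ ≤ rank φ →
      ∃ I : Finset ℕ, I ⊆ Finset.range n ∧ ((I.card : ℝ) ≤ L * rank φ) ∧
        β * rank φ ≤ rank (prestrict (↑I : Set ℕ) φ))
    -- monotonicity under restrictions
    (hmono : ∀ (φ : PolyMap F k) (I : Set ℕ), DegLE d φ →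
      rank (prestrict I φ) ≤ rank φ)
    -- restriction Lipschitz property
    (hlip : ∀ (φ : PolyMap F k) (I J : Set ℕ), DegLE d φ → J.Finite →
      rank (prestrict (I ∪ J) φ) ≤ rank (prestrict I φ) + J.ncard)
    (σ : ℝ) (hσ0 : 0 < σ) (hσ1 : σ ≤ 1) :
    ∃ C κ : ℝ, 0 < C ∧ 0 < κ ∧
      ∀ (n : ℕ) (φ : PolyMap F k), DegLE d φ →
        -- φ ∈ Pol_{≤d}(F^n, F^k): only the variables x₁,…,x_n occur in φ
        (∀ j, (φ j).vars ⊆ Finset.range n) →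
        1 - C * Real.exp (-κ * rank φ) ≤
          subsetPr n σ (fun I =>
            κ * rank φ ≤ rank (prestrict (↑(I.image Fin.val) : Set ℕ) φ)) := by
  obtain ⟨C, κ, hC, hκ, hprob⟩ :=
    IsLinearCoreRank.exists_le_prob (α := ℕ) (r₀ := r₀) hL.le hβ hσ0 hσ1
  refine ⟨C, κ, hC, hκ, fun n φ hφ hvars => ?_⟩
  have hf := isLinearCoreRank_rank_prestrict hnn
    (fun ψ h₁ h₂ h₃ => (hcore n ψ h₁ h₂ h₃).imp fun _ hI => hI.2) hmono hlip hφ hvars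
  have hrange : prestrict ↑(range n) φ = φ := prestrict_eq_self fun j => coe_subset.2 (hvars j)
  rw [subsetPr_eq_prob n σ (fun A => κ * rank φ ≤ rank (prestrict ↑A φ))]
  simpa only [hrange] using hprob _ hf (range n)
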